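/- arXiv:2211.02905 — 2 statements merged into one kernel-verified Lean document; each statement's English description precedes it below -/
import Mathlib

section
/- Consider the linear system over ℝ in variables V₁₁₁, V₁ₛ₁, V₁₁ₛ, V₁ᵣₛ, Vᵣₛ₁, Vₛ₁ᵣ, Vᵣ₁ₛ, V₁ₛᵣ with equations: 3V₁₁₁ = E₁₁₁; V₁ₛ₁ + 2V₁₁ₛ = E₁ₛ₁; V₁ᵣₛ + Vᵣₛ₁ + Vₛ₁ᵣ = E₁ᵣₛ; V₁₁₁ + 2V₁₁ₛ + 4Vᵣ₁ₛ = 0; 6V₁ᵣₛ = 0; V₁ₛ₁ + 4V₁ₛᵣ = 0. If the emptiness values satisfy the linear relation arising from periodicity (the weighted sum of tight-triangle emptiness values over a fundamental domain is zero), then one of these six equations is a linear combination of the other five together with the symmetry identities, i.e., the system has rank at most 5. -/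
/-- For the vertex-potential linear system of case 54, the periodicity relation on the
emptiness values (the positive-integer combination of tight-triangle emptinesses over a
fundamental domain vanishes) makes one of the six equations a consequence of the other
five together with the symmetry identities: the system has rank at most 5. -/
theorem stmt_8 (E111 E1s1 E1rs : ℝ)
    (hper : E111 + 3 * E1s1 + 12 * E1rs = 0)
    (V111 V1s1 V11s V1rs Vrs1 Vs1r Vr1s V1sr : ℝ)
    (hsym1 : Vs1r = Vr1s) (hsym2 : Vrs1 = V1sr)
    (heq1 : 3 * V111 = E111)
    (heq2 : V1s1 + 2 * V11s = E1s1)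
    (heq3 : V1rs + Vrs1 + Vs1r = E1rs)
    (heq4 : V111 + 2 * V11s + 4 * Vr1s = 0)
    (heq5 : 6 * V1rs = 0) :
    V1s1 + 4 * V1sr = 0 := by
  linarith
end

section
/- Let d_e(|e|) be the signed distance from the circumcenter of a triangle to the side e, where the other two sides have fixed lengths a and b and the side e varies in length. Then d_e is a strictly decreasing function of |e| on the domain where the triangle inequality holds, and d_e < 0 exactly when the angle opposite to e is obtuse. -/
open Real Set

set_option maxHeartbeats 1000000 in
/-- For a triangle with two fixed side lengths a, b and third side e of variable length c,
the signed distance d_e = R·cos γ from the circumcenter to the side e (γ being the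
opposite angle, given by the law of cosines) is strictly decreasing in c on the domain
where the triangle inequality holds, and is negative exactly when γ is obtuse. -/
theorem stmt_9 (a b : ℝ) (ha : 0 < a) (hb : 0 < b)
    (γ : ℝ → ℝ) (hγ : ∀ c, γ c = Real.arccos ((a ^ 2 + b ^ 2 - c ^ 2) / (2 * a * b)))
    (d : ℝ → ℝ) (hd : ∀ c, d c = c / (2 * Real.sin (γ c)) * Real.cos (γ c)) :
    StrictAntiOn d (Ioo |a - b| (a + b)) ∧
      ∀ c ∈ Ioo |a - b| (a + b), (d c < 0 ↔ π / 2 < γ c) := by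
  have hab : (0:ℝ) < 2 * a * b := by positivity
  have hs : 2 * a * b ≤ a ^ 2 + b ^ 2 := by nlinarith [sq_nonneg (a - b)]
  have key : ∀ c ∈ Ioo |a - b| (a + b),
      0 < c ∧ -1 < (a ^ 2 + b ^ 2 - c ^ 2) / (2 * a * b) ∧
        (a ^ 2 + b ^ 2 - c ^ 2) / (2 * a * b) < 1 := by
    rintro c ⟨h1, h2⟩
    have hc0 : 0 < c := lt_of_le_of_lt (abs_nonneg _) h1
    have hsq1 : (a - b) ^ 2 < c ^ 2 := by
      have := pow_lt_pow_left₀ h1 (abs_nonneg _) (by norm_num : 2 ≠ 0)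
      rwa [sq_abs] at this
    have hsq2 : c ^ 2 < (a + b) ^ 2 := pow_lt_pow_left₀ h2 hc0.le (by norm_num)
    refine ⟨hc0, ?_, ?_⟩
    · rw [lt_div_iff₀ hab]; nlinarith
    · rw [div_lt_one hab]; nlinarith
  have hform : ∀ c ∈ Ioo |a - b| (a + b),
      d c = c / (2 * Real.sqrt (1 - ((a ^ 2 + b ^ 2 - c ^ 2) / (2 * a * b)) ^ 2)) *
        ((a ^ 2 + b ^ 2 - c ^ 2) / (2 * a * b)) := by
    intro c hc
    obtain ⟨_, hx1, hx2⟩ := key c hc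
    rw [hd, hγ, Real.sin_arccos, Real.cos_arccos hx1.le hx2.le]
  constructor
  · intro c1 hc1 c2 hc2 hlt
    obtain ⟨hc10, hx11, hx12⟩ := key c1 hc1
    obtain ⟨hc20, hx21, hx22⟩ := key c2 hc2
    set x1 : ℝ := (a ^ 2 + b ^ 2 - c1 ^ 2) / (2 * a * b) with hx1def
    set x2 : ℝ := (a ^ 2 + b ^ 2 - c2 ^ 2) / (2 * a * b) with hx2def
    have hcc : c1 ^ 2 < c2 ^ 2 := by nlinarith
    have hxlt : x2 < x1 := by
      rw [hx1def, hx2def, div_lt_div_iff₀ hab hab]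
      nlinarith [mul_pos hab (sub_pos.mpr hcc)]
    have hr1 : 2 * a * b * x1 = a ^ 2 + b ^ 2 - c1 ^ 2 := by
      rw [hx1def]; field_simp
    have hr2 : 2 * a * b * x2 = a ^ 2 + b ^ 2 - c2 ^ 2 := by
      rw [hx2def]; field_simp
    have ec1 : c1 ^ 2 = a ^ 2 + b ^ 2 - 2 * a * b * x1 := by linarith
    have ec2 : c2 ^ 2 = a ^ 2 + b ^ 2 - 2 * a * b * x2 := by linarith
    have h1pos : (0:ℝ) < 1 - x1 ^ 2 := by nlinarith
    have h2pos : (0:ℝ) < 1 - x2 ^ 2 := by nlinarith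
    have hS1 : 0 < Real.sqrt (1 - x1 ^ 2) := Real.sqrt_pos.mpr h1pos
    have hS2 : 0 < Real.sqrt (1 - x2 ^ 2) := Real.sqrt_pos.mpr h2pos
    have hS1sq : Real.sqrt (1 - x1 ^ 2) ^ 2 = 1 - x1 ^ 2 := Real.sq_sqrt h1pos.le
    have hS2sq : Real.sqrt (1 - x2 ^ 2) ^ 2 = 1 - x2 ^ 2 := Real.sq_sqrt h2pos.le
    rw [hform c1 hc1, hform c2 hc2, ← hx1def, ← hx2def,
      div_mul_eq_mul_div, div_mul_eq_mul_div,
      div_lt_div_iff₀ (by positivity) (by positivity)]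
    set S1 := Real.sqrt (1 - x1 ^ 2)
    set S2 := Real.sqrt (1 - x2 ^ 2)
    -- goal : c2 * x2 * (2 * S1) < c1 * x1 * (2 * S2)
    rcases le_or_gt x1 0 with hx1n | hx1p
    · have hx2n : x2 < 0 := lt_of_lt_of_le hxlt hx1n
      have hu : c2 * x2 * (2 * S1) < 0 :=
        mul_neg_of_neg_of_pos (mul_neg_of_pos_of_neg hc20 hx2n) (by positivity)
      have hv : c1 * x1 * (2 * S2) ≤ 0 :=
        mul_nonpos_of_nonpos_of_nonneg (mul_nonpos_of_nonneg_of_nonpos hc10.le hx1n) (by positivity)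
      have hsq : (-(c1 * x1 * (2 * S2))) ^ 2 < (-(c2 * x2 * (2 * S1))) ^ 2 := by
        have e1 : (-(c1 * x1 * (2 * S2))) ^ 2 = c1 ^ 2 * x1 ^ 2 * 4 * (S2 ^ 2) := by ring
        have e2 : (-(c2 * x2 * (2 * S1))) ^ 2 = c2 ^ 2 * x2 ^ 2 * 4 * (S1 ^ 2) := by ring
        rw [hS2sq] at e1
        rw [hS1sq] at e2
        rw [e1, e2, ec1, ec2]
        have hA1 : 0 < a ^ 2 + b ^ 2 - 2 * a * b * x1 := by nlinarith
        have hA12 : a ^ 2 + b ^ 2 - 2 * a * b * x1 < a ^ 2 + b ^ 2 - 2 * a * b * x2 := by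
          nlinarith [mul_pos hab (sub_pos.mpr hxlt)]
        have hx1sq : x1 ^ 2 ≤ x2 ^ 2 := by nlinarith
        have hxx : x1 ^ 2 * (1 - x2 ^ 2) ≤ x2 ^ 2 * (1 - x1 ^ 2) := by nlinarith
        have hx2sq : 0 < x2 ^ 2 * (1 - x1 ^ 2) := by nlinarith [mul_pos (mul_pos_of_neg_of_neg hx2n hx2n) h1pos]
        have main : (a ^ 2 + b ^ 2 - 2 * a * b * x1) * (x1 ^ 2 * (1 - x2 ^ 2)) <
            (a ^ 2 + b ^ 2 - 2 * a * b * x2) * (x2 ^ 2 * (1 - x1 ^ 2)) :=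
          calc (a ^ 2 + b ^ 2 - 2 * a * b * x1) * (x1 ^ 2 * (1 - x2 ^ 2))
              ≤ (a ^ 2 + b ^ 2 - 2 * a * b * x1) * (x2 ^ 2 * (1 - x1 ^ 2)) :=
                mul_le_mul_of_nonneg_left hxx hA1.le
            _ < (a ^ 2 + b ^ 2 - 2 * a * b * x2) * (x2 ^ 2 * (1 - x1 ^ 2)) :=
                mul_lt_mul_of_pos_right hA12 hx2sq
        linarith [main]
      have := lt_of_pow_lt_pow_left₀ 2 (by linarith : (0:ℝ) ≤ -(c2 * x2 * (2 * S1))) hsq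
      linarith
    · rcases le_or_gt x2 0 with hx2n | hx2p
      · have hu : c2 * x2 * (2 * S1) ≤ 0 :=
          mul_nonpos_of_nonpos_of_nonneg (mul_nonpos_of_nonneg_of_nonpos hc20.le hx2n) (by positivity)
        have hv : 0 < c1 * x1 * (2 * S2) := by positivity
        linarith
      · have hu : 0 < c2 * x2 * (2 * S1) := by positivity
        have hsq : (c2 * x2 * (2 * S1)) ^ 2 < (c1 * x1 * (2 * S2)) ^ 2 := by
          have e1 : (c1 * x1 * (2 * S2)) ^ 2 = c1 ^ 2 * x1 ^ 2 * 4 * (S2 ^ 2) := by ring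
          have e2 : (c2 * x2 * (2 * S1)) ^ 2 = c2 ^ 2 * x2 ^ 2 * 4 * (S1 ^ 2) := by ring
          rw [hS2sq] at e1
          rw [hS1sq] at e2
          rw [e1, e2, ec1, ec2]
          have t2a : 0 < x1 * (1 - x2 ^ 2) := mul_pos hx1p h2pos
          have t2b : 0 < x2 * (1 - x2) := mul_pos hx2p (by linarith)
          have t2 : 0 < (1 - x1) * (x1 * (1 - x2 ^ 2) + x2 * (1 - x2)) :=
            mul_pos (by linarith) (by linarith)
          have t3 : 0 < 2 * a * b * ((1 - x1) * (x1 * (1 - x2 ^ 2) + x2 * (1 - x2))) :=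
            mul_pos hab t2
          have t1 : 0 ≤ (a ^ 2 + b ^ 2 - 2 * a * b) * (x1 + x2) :=
            mul_nonneg (by linarith) (by linarith)
          have hkey : 0 < (x1 - x2) * ((a ^ 2 + b ^ 2 - 2 * a * b) * (x1 + x2) +
              2 * a * b * ((1 - x1) * (x1 * (1 - x2 ^ 2) + x2 * (1 - x2)))) :=
            mul_pos (by linarith) (by linarith)
          nlinarith [hkey]
        have := lt_of_pow_lt_pow_left₀ 2 (by positivity : (0:ℝ) ≤ c1 * x1 * (2 * S2)) hsq
        linarith
  · intro c hc
    obtain ⟨hc0, hx1, hx2⟩ := key c hc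
    set x : ℝ := (a ^ 2 + b ^ 2 - c ^ 2) / (2 * a * b) with hxdef
    have h1pos : (0:ℝ) < 1 - x ^ 2 := by nlinarith
    have hS : 0 < Real.sqrt (1 - x ^ 2) := Real.sqrt_pos.mpr h1pos
    have hdc : d c = c / (2 * Real.sqrt (1 - x ^ 2)) * x := by
      rw [hform c hc, ← hxdef]
    have hfac : 0 < c / (2 * Real.sqrt (1 - x ^ 2)) := by positivity
    have h1 : d c < 0 ↔ x < 0 := by
      rw [hdc]
      constructor
      · intro h
        by_contra hx
        push_neg at hx
        exact absurd h (not_lt.mpr (mul_nonneg hfac.le hx))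
      · intro h
        exact mul_neg_of_pos_of_neg hfac h
    rw [h1, hγ c, ← hxdef]
    constructor
    · intro h
      calc π / 2 = Real.arccos 0 := Real.arccos_zero.symm
        _ < Real.arccos x := Real.strictAntiOn_arccos ⟨by linarith, by linarith⟩ ⟨by norm_num, by norm_num⟩ h
    · intro h
      by_contra hx
      push_neg at hx
      have := Real.arccos_le_pi_div_two.mpr hx
      linarith
end
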